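/- Fix t, r, r', s, s' ∈ ℂ with t ≠ 0, set k = t - 3, u = r - t·s, v = r' - t·s', Δ = (u² + u·v + v²)/(3t) - (t-1)²/t, and w = (u - v)(2u + v)(u + 2v)/27. Then for every x ∈ ℂ, p^{Δ,w}_k(x) = -(x - x₁)(x - x₂)(x - x₃), where x₁ = t - 1 - (u - v)/3, x₂ = t - 1 + (2u + v)/3 and x₃ = t - 1 - (u + 2v)/3. -/

import Mathlib

/-!
The cubic depends on `Δ` only through `t Δ` (as `k + 3 = t`), so once `3 t Δ` and `27 w` are
replaced by their polynomial values in `u, v, t`, the factorisation is a polynomial identity,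
equivalently Vieta's formulas for `x₁, x₂, x₃`.
-/

section BPCubic

variable {K : Type*} [Field K] [CharZero K]

/-- The polynomial `p^{Δ,w}_k` evaluated at `x`. -/
def bpCubic (k Δ w x : K) : K :=
  w - (k + 2) * (k + 3) * Δ + ((k + 3) * Δ - 2 * (k + 2) ^ 2) * x + 3 * (k + 2) * x ^ 2 - x ^ 3

theorem bpCubic_sub_three_eq_neg_prod {t u v Δ w : K}
    (hΔ : 3 * t * Δ = u ^ 2 + u * v + v ^ 2 - 3 * (t - 1) ^ 2)
    (hw : 27 * w = (u - v) * (2 * u + v) * (u + 2 * v)) (x : K) :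
    bpCubic (t - 3) Δ w x =
      -((x - (t - 1 - (u - v) / 3)) * (x - (t - 1 + (2 * u + v) / 3)) *
        (x - (t - 1 - (u + 2 * v) / 3))) := by
  unfold bpCubic
  linear_combination (x - t + 1) / 3 * hΔ + (1 / 27) * hw

end BPCubic

/-- Factorisation of the cubic polynomial `p^{Δ,w}_k` governing the `G⁻₀`-action on the top
space of the relaxed Bershadsky–Polyakov module, for the standard parametrisation
`t = k + 3`, `u = r - ts`, `v = r' - ts'` of Zamolodchikov highest weights. -/
theorem bp_cubic_factorisation (t r r' s s' : ℂ) (ht : t ≠ 0) :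
    let k := t - 3
    let u := r - t * s
    let v := r' - t * s'
    let Δ := (u ^ 2 + u * v + v ^ 2) / (3 * t) - (t - 1) ^ 2 / t
    let w := (u - v) * (2 * u + v) * (u + 2 * v) / 27
    let x₁ := t - 1 - (u - v) / 3
    let x₂ := t - 1 + (2 * u + v) / 3
    let x₃ := t - 1 - (u + 2 * v) / 3
    ∀ x : ℂ,
      w - (k + 2) * (k + 3) * Δ + ((k + 3) * Δ - 2 * (k + 2) ^ 2) * x
          + 3 * (k + 2) * x ^ 2 - x ^ 3
        = -((x - x₁) * (x - x₂) * (x - x₃)) := by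
  intro k u v Δ w x₁ x₂ x₃
  have hΔ : 3 * t * Δ = u ^ 2 + u * v + v ^ 2 - 3 * (t - 1) ^ 2 := by
    simp only [Δ]
    field_simp
  have hw : 27 * w = (u - v) * (2 * u + v) * (u + 2 * v) := by
    simp only [w]
    ring
  exact bpCubic_sub_three_eq_neg_prod hΔ hw
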